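/- arXiv:1101.4903 — 2 statements merged into one kernel-verified Lean document; each statement's English description precedes it below -/
import Mathlib

section
/- For the two-armed Dirichlet bandit value function W with finitely supported priors, the map x ↦ W(M·F̃ + δ_x, α₂; A_n) is increasing and convex in x ∈ ℝ, where M > 0, F̃ is a finitely supported probability distribution, and α₂ is a finite nonnull finitely supported measure. -/
/-- Total mass of a finitely supported (signed) measure on ℝ. -/
noncomputable def fmass (α : ℝ →₀ ℝ) : ℝ := α.sum fun _ w => w

/-- Mean of the normalized measure α / α(ℝ). -/
noncomputable def fmean (α : ℝ →₀ ℝ) : ℝ := (α.sum fun x w => w * x) / fmass α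

/-- Value function of the two-armed Dirichlet bandit with finitely supported priors,
defined by backward induction on the discount sequence.  Pulling arm i with prior αᵢ
yields an observation X distributed as αᵢ/αᵢ(ℝ) and updates the prior to αᵢ + δ_X. -/
noncomputable def bW : (ℝ →₀ ℝ) → (ℝ →₀ ℝ) → List ℝ → ℝ
  | _, _, [] => 0
  | α₁, α₂, a :: as =>
      max (a * fmean α₁ +
            (α₁.sum fun x w => w * bW (α₁ + Finsupp.single x 1) α₂ as) / fmass α₁)
          (a * fmean α₂ +
            (α₂.sum fun y w => w * bW α₁ (α₂ + Finsupp.single y 1) as) / fmass α₂)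

/-- Auxiliary predicate: monotone and convex on all of ℝ. -/
def MC (f : ℝ → ℝ) : Prop := Monotone f ∧ ConvexOn ℝ Set.univ f

lemma MC_const (q : ℝ) : MC (fun _ => q) :=
  ⟨monotone_const, convexOn_const q convex_univ⟩

lemma MC_add {f g : ℝ → ℝ} (hf : MC f) (hg : MC g) : MC (fun x => f x + g x) :=
  ⟨hf.1.add hg.1, hf.2.add hg.2⟩

lemma MC_mul {f : ℝ → ℝ} (c : ℝ) (hc : 0 ≤ c) (hf : MC f) : MC (fun x => c * f x) := by
  refine ⟨fun a b h => mul_le_mul_of_nonneg_left (hf.1 h) hc, ?_⟩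
  exact hf.2.smul hc

lemma MC_div {f : ℝ → ℝ} (d : ℝ) (hd : 0 < d) (hf : MC f) : MC (fun x => f x / d) := by
  simp only [div_eq_inv_mul]
  exact MC_mul d⁻¹ (by positivity) hf

lemma MC_max {f g : ℝ → ℝ} (hf : MC f) (hg : MC g) : MC (fun x => max (f x) (g x)) := by
  refine ⟨hf.1.max hg.1, ?_⟩
  have h := hf.2.sup hg.2
  have he : (f ⊔ g) = fun x => max (f x) (g x) := by
    funext x; simp [Pi.sup_apply]
  rwa [he] at h

lemma MC_sum (s : Finset ℝ) (w : ℝ → ℝ) (g : ℝ → ℝ → ℝ)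
    (hw : ∀ y ∈ s, 0 ≤ w y) (hg : ∀ y ∈ s, MC (g y)) :
    MC (fun x => ∑ y ∈ s, w y * g y x) := by
  classical
  induction s using Finset.induction_on with
  | empty => simpa using MC_const 0
  | @insert a s ha ih =>
      simp only [Finset.sum_insert ha]
      exact MC_add
        (MC_mul _ (hw _ (Finset.mem_insert_self _ _)) (hg _ (Finset.mem_insert_self _ _)))
        (ih (fun y hy => hw y (Finset.mem_insert_of_mem hy))
            (fun y hy => hg y (Finset.mem_insert_of_mem hy)))

lemma fmass_add_single (β : ℝ →₀ ℝ) (x c : ℝ) :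
    fmass (β + Finsupp.single x c) = fmass β + c := by
  unfold fmass
  rw [Finsupp.sum_add_index' (fun _ => rfl) (fun _ _ _ => rfl),
    Finsupp.sum_single_index rfl]

lemma sum_add_single (β : ℝ →₀ ℝ) (x c : ℝ) (g : ℝ → ℝ) :
    ((β + Finsupp.single x c).sum fun y w => w * g y)
      = (β.sum fun y w => w * g y) + c * g x := by
  rw [Finsupp.sum_add_index' (fun a => by simp) (fun a b₁ b₂ => by ring),
    Finsupp.sum_single_index (by simp)]

lemma fmean_add_single (β : ℝ →₀ ℝ) (x c : ℝ) :
    fmean (β + Finsupp.single x c)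
      = ((β.sum fun y w => w * y) + c * x) / (fmass β + c) := by
  unfold fmean
  rw [fmass_add_single, sum_add_single β x c (fun y => y)]

lemma single_apply_nonneg (y z : ℝ) {c : ℝ} (hc : 0 ≤ c) :
    0 ≤ (Finsupp.single y c : ℝ →₀ ℝ) z := by
  rw [Finsupp.single_apply]; split <;> simp [hc]

lemma MC_bW (A : List ℝ) : (∀ a ∈ A, 0 ≤ a) →
    ∀ (β : ℝ →₀ ℝ), (∀ y, 0 ≤ β y) → 0 < fmass β →
    ∀ (c : ℝ), 0 ≤ c →
    ∀ (α₂ : ℝ →₀ ℝ), (∀ y, 0 ≤ α₂ y) → 0 < fmass α₂ →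
    MC (fun x => bW (β + Finsupp.single x c) α₂ A) := by
  induction A with
  | nil =>
      intro _ β _ _ c _ α₂ _ _
      simpa [bW] using MC_const 0
  | cons a as ih =>
      intro hA β hβ hβm c hc α₂ hα₂ hα₂m
      have ha : 0 ≤ a := hA a (by simp)
      have has : ∀ b ∈ as, 0 ≤ b := fun b hb => hA b (by simp [hb])
      have hD : 0 < fmass β + c := by linarith
      have hEq : (fun x => bW (β + Finsupp.single x c) α₂ (a :: as)) =
          fun x => max
            (a * (((β.sum fun y w => w * y) + c * x) / (fmass β + c)) +
              ((∑ y ∈ β.support,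
                  β y * bW ((β + Finsupp.single y 1) + Finsupp.single x c) α₂ as)
                + c * bW (β + Finsupp.single x (c + 1)) α₂ as) / (fmass β + c))
            (a * fmean α₂ +
              (∑ y ∈ α₂.support,
                  α₂ y * bW (β + Finsupp.single x c) (α₂ + Finsupp.single y 1) as)
                / fmass α₂) := by
        funext x
        simp only [bW]
        congr 1
        · rw [fmean_add_single, fmass_add_single,
            sum_add_single β x c
              (fun y => bW ((β + Finsupp.single x c) + Finsupp.single y 1) α₂ as)]
          congr 2
          congr 1
          · exact Finset.sum_congr rfl fun y _ => by rw [add_right_comm]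
          · rw [add_assoc, ← Finsupp.single_add]
      rw [hEq]
      apply MC_max
      · apply MC_add
        · exact MC_mul a ha (MC_div _ hD
            (MC_add (MC_const _) (MC_mul c hc ⟨monotone_id, convexOn_id convex_univ⟩)))
        · refine MC_div _ hD (MC_add ?_ (MC_mul c hc (ih has β hβ hβm (c + 1) (by linarith) α₂ hα₂ hα₂m)))
          refine MC_sum β.support (fun y => β y)
            (fun y x => bW ((β + Finsupp.single y 1) + Finsupp.single x c) α₂ as)
            (fun y _ => hβ y) (fun y _ => ?_)
          refine ih has (β + Finsupp.single y 1)
            (fun z => add_nonneg (hβ z) (single_apply_nonneg y z zero_le_one)) ?_ c hc α₂ hα₂ hα₂m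
          rw [fmass_add_single]; linarith
      · refine MC_add (MC_const _) (MC_div _ hα₂m ?_)
        refine MC_sum α₂.support (fun y => α₂ y)
          (fun y x => bW (β + Finsupp.single x c) (α₂ + Finsupp.single y 1) as)
          (fun y _ => hα₂ y) (fun y _ => ?_)
        refine ih has β hβ hβm c hc (α₂ + Finsupp.single y 1)
          (fun z => add_nonneg (hα₂ z) (single_apply_nonneg y z zero_le_one)) ?_
        rw [fmass_add_single]; linarith

theorem bW_mono_convex_in_obs (M : ℝ) (hM : 0 < M) (F' α₂ : ℝ →₀ ℝ)
    (hF' : ∀ x, 0 ≤ F' x) (hF'1 : fmass F' = 1)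
    (hα₂ : ∀ x, 0 ≤ α₂ x) (hα₂m : 0 < fmass α₂)
    (A : List ℝ) (hA : ∀ a ∈ A, 0 ≤ a) :
    Monotone (fun x => bW (M • F' + Finsupp.single x 1) α₂ A) ∧
    ConvexOn ℝ Set.univ (fun x => bW (M • F' + Finsupp.single x 1) α₂ A) := by
  have h1 : ∀ y, 0 ≤ (M • F') y := fun y => by
    rw [Finsupp.smul_apply, smul_eq_mul]
    exact mul_nonneg hM.le (hF' y)
  have h2 : fmass (M • F') = M := by
    unfold fmass
    rw [Finsupp.sum_smul_index' (fun _ => by simp)]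
    simp only [smul_eq_mul, ← Finsupp.mul_sum]
    rw [show (F'.sum fun _ w => w) = fmass F' from rfl, hF'1, mul_one]
  exact MC_bW A hA (M • F') h1 (by rw [h2]; exact hM) 1 zero_le_one α₂ hα₂ hα₂m
end

section
/- For the two-armed Dirichlet bandit value function W with finitely supported priors, for any c > 0 and λ ∈ ℝ, W(α + c·δ_λ, δ_λ; A_n) ≤ W(α, δ_λ; A_n), where arm 2 has a degenerate (known) prior at λ. -/
lemma single_app_nonneg {x y c : ℝ} (hc : 0 ≤ c) : 0 ≤ Finsupp.single x c y := by
  rw [Finsupp.single_apply]; split <;> simp [hc]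

lemma fmass_add (α β : ℝ →₀ ℝ) : fmass (α + β) = fmass α + fmass β :=
  Finsupp.sum_add_index' (fun _ => rfl) (fun _ _ _ => rfl)

lemma fmass_single (x c : ℝ) : fmass (Finsupp.single x c) = c :=
  Finsupp.sum_single_index rfl

lemma fmean_single (x : ℝ) {c : ℝ} (hc : c ≠ 0) : fmean (Finsupp.single x c) = x := by
  unfold fmean
  rw [fmass_single, Finsupp.sum_single_index (by ring), mul_comm, mul_div_assoc,
    div_self hc, mul_one]

lemma bW_mass2 (lam : ℝ) : ∀ (A : List ℝ) (α : ℝ →₀ ℝ) (s : ℝ), 0 < s →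
    bW α (Finsupp.single lam s) A = bW α (Finsupp.single lam 1) A := by
  intro A
  induction A with
  | nil => intros; rfl
  | cons a as ih =>
    intro α s hs
    simp only [bW]
    congr 1
    · refine congrArg (fun t => a * fmean α + t / fmass α) (Finsupp.sum_congr fun x _ => ?_)
      rw [ih _ _ hs, ih _ _ one_pos]
    · rw [fmean_single lam hs.ne', fmean_single lam one_ne_zero, fmass_single, fmass_single,
        Finsupp.sum_single_index (by ring), Finsupp.sum_single_index (by ring),
        ← Finsupp.single_add, ← Finsupp.single_add,
        ih _ _ (by linarith), ih _ (1+1) (by norm_num)]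
      field_simp

lemma sum_add_lin (α β : ℝ →₀ ℝ) (g : ℝ → ℝ) :
    (α + β).sum (fun x w => w * g x) =
      α.sum (fun x w => w * g x) + β.sum (fun x w => w * g x) :=
  Finsupp.sum_add_index' (fun a => zero_mul (g a)) (fun a b₁ b₂ => add_mul b₁ b₂ (g a))

lemma bW_key (lam : ℝ) : ∀ (A : List ℝ) (α : ℝ →₀ ℝ), (∀ x, 0 ≤ α x) → 0 < fmass α →
    ∀ c : ℝ, 0 < c →
    bW (α + Finsupp.single lam c) (Finsupp.single lam 1) A ≤
      bW α (Finsupp.single lam 1) A := by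
  intro A
  induction A with
  | nil => intros; exact le_refl 0
  | cons a as ih =>
    intro α hα hM c hc
    have hmass2 : ∀ (α' : ℝ →₀ ℝ) (s : ℝ), 0 < s →
        bW α' (Finsupp.single lam s) as = bW α' (Finsupp.single lam 1) as :=
      fun α' s hs => bW_mass2 lam as α' s hs
    set β := α + Finsupp.single lam c with hβdef
    set M := fmass α with hMdef
    set T := α.sum (fun x w => w * x) with hTdef
    set Sα := α.sum (fun x w => w * bW (α + Finsupp.single x 1) (Finsupp.single lam 1) as)
      with hSαdef
    set Vα := bW α (Finsupp.single lam 1) as with hVdef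
    have hbr2 : ∀ α' : ℝ →₀ ℝ,
        a * fmean (Finsupp.single lam 1) +
          ((Finsupp.single lam 1).sum fun y w =>
            w * bW α' (Finsupp.single lam 1 + Finsupp.single y 1) as) /
            fmass (Finsupp.single lam 1)
        = a * lam + bW α' (Finsupp.single lam 1) as := by
      intro α'
      rw [fmean_single lam one_ne_zero, fmass_single,
        Finsupp.sum_single_index (by ring), ← Finsupp.single_add,
        hmass2 α' (1 + 1) (by norm_num)]
      ring
    simp only [bW]
    rw [hbr2, hbr2]
    have hβmass : fmass β = M + c := by rw [hβdef, fmass_add, fmass_single]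
    have hMc : 0 < M + c := by linarith
    have hβmean : fmean β = (T + c * lam) / (M + c) := by
      unfold fmean
      rw [hβmass, hβdef, sum_add_lin, Finsupp.sum_single_index (zero_mul lam)]
    have hsum : (β.sum fun x w =>
          w * bW (β + Finsupp.single x 1) (Finsupp.single lam 1) as)
        = (α.sum fun x w => w * bW (β + Finsupp.single x 1) (Finsupp.single lam 1) as)
          + c * bW (α + Finsupp.single lam (c + 1)) (Finsupp.single lam 1) as := by
      rw [hβdef, sum_add_lin, Finsupp.sum_single_index
        (zero_mul (bW ((α + Finsupp.single lam c) + Finsupp.single lam 1)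
          (Finsupp.single lam 1) as))]
      congr 2
      rw [add_assoc, ← Finsupp.single_add]
    have hterm : (α.sum fun x w =>
          w * bW (β + Finsupp.single x 1) (Finsupp.single lam 1) as) ≤ Sα := by
      rw [hSαdef, Finsupp.sum, Finsupp.sum]
      refine Finset.sum_le_sum fun x _ => ?_
      have hre : β + Finsupp.single x 1 = (α + Finsupp.single x 1) + Finsupp.single lam c := by
        rw [hβdef]; abel
      rw [hre]
      refine mul_le_mul_of_nonneg_left (ih _ (fun y => ?_) ?_ c hc) (hα x)
      · rw [Finsupp.add_apply]
        exact add_nonneg (hα y) (single_app_nonneg zero_le_one)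
      · rw [fmass_add, fmass_single]; linarith
    have hlamterm : bW (α + Finsupp.single lam (c + 1)) (Finsupp.single lam 1) as ≤ Vα :=
      ih α hα hM (c + 1) (by linarith)
    set R1 := a * fmean α + Sα / fmass α with hR1def
    set R2 := a * lam + Vα with hR2def
    refine max_le ?_ (le_max_of_le_right (add_le_add (le_refl _) (ih α hα hM c hc)))
    have h1 : a * fmean β +
        (β.sum fun x w => w * bW (β + Finsupp.single x 1) (Finsupp.single lam 1) as) /
          fmass β
        ≤ a * ((T + c * lam) / (M + c)) + (Sα + c * Vα) / (M + c) := by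
      rw [hβmean, hβmass, hsum]
      have hnum : (α.sum fun x w =>
          w * bW (β + Finsupp.single x 1) (Finsupp.single lam 1) as)
          + c * bW (α + Finsupp.single lam (c + 1)) (Finsupp.single lam 1) as
          ≤ Sα + c * Vα :=
        add_le_add hterm (mul_le_mul_of_nonneg_left hlamterm hc.le)
      exact add_le_add (le_refl _) (div_le_div_of_nonneg_right hnum hMc.le |>.trans (le_refl _))
    refine h1.trans ?_
    have hmean : fmean α = T / M := rfl
    have heq : a * ((T + c * lam) / (M + c)) + (Sα + c * Vα) / (M + c)
        = (M * R1 + c * R2) / (M + c) := by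
      rw [hR1def, hR2def, hmean, ← hMdef]
      have hM0 : M ≠ 0 := hM.ne'
      field_simp
      ring
    rw [heq, div_le_iff₀ hMc]
    have hq1 : M * R1 ≤ M * max R1 R2 := mul_le_mul_of_nonneg_left (le_max_left _ _) hM.le
    have hq2 : c * R2 ≤ c * max R1 R2 := mul_le_mul_of_nonneg_left (le_max_right _ _) hc.le
    nlinarith [hq1, hq2]

theorem bW_known_arm_weight (α : ℝ →₀ ℝ) (hα : ∀ x, 0 ≤ α x) (hαm : 0 < fmass α)
    (c lam : ℝ) (hc : 0 < c) (A : List ℝ) (hA : ∀ a ∈ A, 0 ≤ a) :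
    bW (α + Finsupp.single lam c) (Finsupp.single lam 1) A ≤
      bW α (Finsupp.single lam 1) A :=
  bW_key lam A α hα hαm c hc
end
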